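/- arXiv:2302.09296 — 11 statements merged into one kernel-verified Lean document; each statement's English description precedes it below -/
import Mathlib

section
/- Let R be a commutative ring, S a multiplicative subset of R, and 0 → A → B → C → 0 an exact sequence of R-modules. If A is uniformly S-Noetherian with respect to s₁ ∈ S and C is uniformly S-Noetherian with respect to s₂ ∈ S, then B is uniformly S-Noetherian with respect to s₁s₂. -/
/-- A submodule `N` is `s`-finite if there is a finitely generated submodule `F`
with `s N ⊆ F ⊆ N`. -/
def SFinSub {R M : Type*} [CommRing R] [AddCommGroup M] [Module R M]
    (s : R) (N : Submodule R M) : Prop :=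
  ∃ F : Submodule R M, F.FG ∧ F ≤ N ∧ ∀ x ∈ N, s • x ∈ F

theorem uniformly_S_noetherian_of_exact
    {R A B C : Type*} [CommRing R]
    [AddCommGroup A] [Module R A] [AddCommGroup B] [Module R B]
    [AddCommGroup C] [Module R C]
    (S : Submonoid R)
    (f : A →ₗ[R] B) (g : B →ₗ[R] C)
    (hf : Function.Injective f) (hg : Function.Surjective g)
    (hfg : LinearMap.range f = LinearMap.ker g)
    (s₁ : R) (hs₁ : s₁ ∈ S) (hA : ∀ N : Submodule R A, SFinSub s₁ N)
    (s₂ : R) (hs₂ : s₂ ∈ S) (hC : ∀ N : Submodule R C, SFinSub s₂ N) :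
    ∀ N : Submodule R B, SFinSub (s₁ * s₂) N := by
  intro N
  classical
  obtain ⟨FA, hFAfg, hFAle, hFA⟩ := hA (N.comap f)
  obtain ⟨FC, hFCfg, hFCle, hFC⟩ := hC (N.map g)
  obtain ⟨T, hT⟩ := hFCfg
  -- lift each element of T to N
  have hlift : ∀ c : T, ∃ b : B, b ∈ N ∧ g b = c := by
    intro ⟨c, hc⟩
    have : c ∈ N.map g := hFCle (hT ▸ Submodule.subset_span hc)
    obtain ⟨b, hb, rfl⟩ := this
    exact ⟨b, hb, rfl⟩
  choose lift hliftN hliftg using hlift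
  set T' : Finset B := Finset.univ.image lift with hT'
  refine ⟨FA.map f ⊔ Submodule.span R (T' : Set B), ?_, ?_, ?_⟩
  · exact Submodule.FG.sup (hFAfg.map f) ⟨T', rfl⟩
  · refine sup_le (fun x hx => ?_) (Submodule.span_le.mpr ?_)
    · obtain ⟨a, ha, rfl⟩ := hx
      exact hFAle ha
    · intro x hx
      simp only [hT', Finset.coe_image, Set.mem_image, Finset.mem_coe] at hx
      obtain ⟨c, -, rfl⟩ := hx
      exact hliftN c
  · intro x hx
    -- s₂ • g x ∈ FC = span T
    have hgx : s₂ • g x ∈ Submodule.span R (T : Set C) := by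
      rw [hT]; exact hFC (g x) ⟨x, hx, rfl⟩
    -- span T ≤ map g (span T')
    have hTle : Submodule.span R (T : Set C) ≤ (Submodule.span R (T' : Set B)).map g := by
      rw [Submodule.map_span]
      apply Submodule.span_mono
      intro c hc
      refine ⟨lift ⟨c, hc⟩, ?_, hliftg ⟨c, hc⟩⟩
      simp [hT']
    obtain ⟨y, hy, hgy⟩ := hTle hgx
    -- s₂ • x - y ∈ ker g ∩ N
    have hker : s₂ • x - y ∈ LinearMap.ker g := by
      simp [LinearMap.mem_ker, map_sub, hgy]
    rw [← hfg] at hker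
    obtain ⟨a, ha⟩ := hker
    have haN : a ∈ N.comap f := by
      simp only [Submodule.mem_comap, ha]
      exact sub_mem (N.smul_mem s₂ hx) (Submodule.span_le.mpr
        (fun z hz => by
          simp only [hT', Finset.coe_image, Set.mem_image, Finset.mem_coe] at hz
          obtain ⟨c, -, rfl⟩ := hz
          exact hliftN c) hy)
    have h1 : s₁ • a ∈ FA := hFA a haN
    have : (s₁ * s₂) • x = f (s₁ • a) + s₁ • y := by
      rw [map_smul, ha, smul_sub, mul_smul]
      abel
    rw [this]
    exact Submodule.add_mem _ (le_sup_left (α := Submodule R B)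
      (Submodule.mem_map_of_mem h1)) (le_sup_right (α := Submodule R B)
      (Submodule.smul_mem _ s₁ hy))
end

section
/- Let R be a commutative ring and S a multiplicative subset of R. If R is a uniformly S-Noetherian ring with respect to s ∈ S, then the free module R^n is a uniformly S-Noetherian R-module with respect to s^n. -/
def UniformlySNoetherian {R : Type*} [CommRing R] (s : R) (M : Type*) [AddCommGroup M]
    [Module R M] : Prop :=
  ∀ N : Submodule R M, SFinSub s N

section

open Submodule LinearMap

variable {R M P : Type*} [CommRing R] [AddCommGroup M] [Module R M] [AddCommGroup P] [Module R P]

theorem Submodule.FG.exists_fg_le_map_eq {F : Submodule R P} (hF : F.FG) {N : Submodule R M}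
    {f : M →ₗ[R] P} (hFN : F ≤ N.map f) : ∃ G : Submodule R M, G.FG ∧ G ≤ N ∧ G.map f = F := by
  classical
  obtain ⟨T, rfl⟩ := hF
  obtain ⟨T', hT'N, rfl⟩ := Finset.subset_set_image_iff.mp (span_le.mp hFN)
  exact ⟨span R T', fg_span T'.finite_toSet, span_le.mpr hT'N, by
    rw [Finset.coe_image, map_span]⟩

theorem SFinSub.map {s : R} {N : Submodule R M} (h : SFinSub s N) (f : M →ₗ[R] P) :
    SFinSub s (N.map f) := by
  obtain ⟨F, hF, hFN, hsF⟩ := h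
  refine ⟨F.map f, hF.map f, map_mono hFN, ?_⟩
  rintro _ ⟨x, hx, rfl⟩
  exact ⟨s • x, hsF x hx, map_smul f s x⟩

theorem SFinSub.of_le_range {s : R} (f : M →ₗ[R] P) (hM : UniformlySNoetherian s M)
    {N : Submodule R P} (hN : N ≤ range f) : SFinSub s N :=
  map_comap_eq_of_le hN ▸ (hM _).map f

theorem SFinSub.of_inf_ker_of_map (f : M →ₗ[R] P) {a b : R} {N : Submodule R M}
    (hker : SFinSub a (N ⊓ ker f)) (hmap : SFinSub b (N.map f)) : SFinSub (a * b) N := by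
  obtain ⟨F, hF, hFN, hbF⟩ := hmap
  obtain ⟨G, hG, hGN, rfl⟩ := hF.exists_fg_le_map_eq hFN
  obtain ⟨K, hK, hKN, haK⟩ := hker
  refine ⟨G ⊔ K, hG.sup hK, sup_le hGN (hKN.trans inf_le_left), fun x hx => ?_⟩
  obtain ⟨z, hzG, hz⟩ := hbF (f x) (mem_map_of_mem hx)
  have hdiff : b • x - z ∈ N ⊓ ker f :=
    ⟨N.sub_mem (N.smul_mem b hx) (hGN hzG), by simp [hz]⟩
  have hsplit : (a * b) • x = a • (b • x - z) + a • z := by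
    rw [smul_sub, mul_smul]; abel
  rw [hsplit]
  exact add_mem (mem_sup_right (haK _ hdiff)) (mem_sup_left (G.smul_mem a hzG))

namespace UniformlySNoetherian

theorem of_subsingleton [Subsingleton M] (s : R) : UniformlySNoetherian s M :=
  fun _ => ⟨⊥, fg_bot, bot_le, fun x _ => Subsingleton.elim (s • x) 0 ▸ zero_mem ⊥⟩

theorem of_surjective {s : R} (hM : UniformlySNoetherian s M) {f : M →ₗ[R] P}
    (hf : Function.Surjective f) : UniformlySNoetherian s P :=
  fun _ => SFinSub.of_le_range f hM (range_eq_top.mpr hf ▸ le_top)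

theorem prod {s t : R} (hM : UniformlySNoetherian s M) (hP : UniformlySNoetherian t P) :
    UniformlySNoetherian (t * s) (M × P) :=
  fun _ => SFinSub.of_inf_ker_of_map (fst R M P)
    (SFinSub.of_le_range (inr R M P) hP (inf_le_right.trans (ker_fst R M P).le)) (hM _)

end UniformlySNoetherian

end

theorem pow_uniformly_S_noetherian_general
    {R : Type*} [CommRing R] (s : R)
    (hR : ∀ I : Ideal R, SFinSub s I) (n : ℕ) :
    ∀ N : Submodule R (Fin n → R), SFinSub (s ^ n) N := by
  induction n with
  | zero => exact UniformlySNoetherian.of_subsingleton _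
  | succ n ih =>
    rw [pow_succ]
    exact (UniformlySNoetherian.prod hR ih).of_surjective
      (Fin.consLinearEquiv R fun _ : Fin (n + 1) => R).surjective

theorem pow_uniformly_S_noetherian
    {R : Type*} [CommRing R] (S : Submonoid R) (s : R) (hs : s ∈ S)
    (hR : ∀ I : Ideal R, SFinSub s I) (n : ℕ) :
    ∀ N : Submodule R (Fin n → R), SFinSub (s ^ n) N :=
  pow_uniformly_S_noetherian_general s hR n
end

section
/- Let R be a commutative ring, S a multiplicative subset of R, M an R-module, and s ∈ S. Let N be a submodule of M maximal among submodules not s^k-finite for any positive integer k, and let 𝔭 = (N : M). Then M(𝔭) ⊆ N, where M(𝔭) = {x ∈ M | tx ∈ 𝔭M for some t ∈ R \ 𝔭}. -/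
/-- If a finitely generated submodule `H` is contained in `A ⊔ B`, there is a
finitely generated `W ≤ A` with `H ≤ W ⊔ B`. -/
lemma fg_sup_split {R M : Type*} [CommRing R] [AddCommGroup M] [Module R M]
    (A B H : Submodule R M) (hH : H.FG) (hle : H ≤ A ⊔ B) :
    ∃ W : Submodule R M, W.FG ∧ W ≤ A ∧ H ≤ W ⊔ B := by
  classical
  obtain ⟨T, rfl⟩ := hH
  induction T using Finset.induction_on with
  | empty => exact ⟨⊥, Submodule.fg_bot, bot_le, by simp⟩
  | @insert a T _ ih =>
    have ha : a ∈ A ⊔ B :=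
      hle (Submodule.subset_span (Finset.mem_coe.mpr (Finset.mem_insert_self a T)))
    obtain ⟨u, hu, v, hv, huv⟩ := Submodule.mem_sup.mp ha
    have hTle : Submodule.span R (T : Set M) ≤ A ⊔ B :=
      le_trans (Submodule.span_mono (Finset.coe_subset.2 (Finset.subset_insert a T))) hle
    obtain ⟨W, hWfg, hWle, hW⟩ := ih hTle
    refine ⟨Submodule.span R {u} ⊔ W, (Submodule.fg_span_singleton u).sup hWfg,
      sup_le ((Submodule.span_singleton_le_iff_mem u A).mpr hu) hWle, ?_⟩
    rw [Finset.coe_insert, Submodule.span_insert]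
    apply sup_le
    · have : a ∈ Submodule.span R {u} ⊔ B := by
        rw [← huv]
        exact Submodule.add_mem _ (Submodule.mem_sup_left (Submodule.mem_span_singleton_self u))
          (Submodule.mem_sup_right hv)
      refine le_trans ((Submodule.span_singleton_le_iff_mem a _).mpr this) ?_
      exact sup_le_sup (le_sup_left) le_rfl
    · exact le_trans hW (sup_le_sup le_sup_right le_rfl)

theorem Mp_subset_of_maximal_non_sk_finite
    {R M : Type*} [CommRing R] [AddCommGroup M] [Module R M]
    (S : Submonoid R) (s : R) (hs : s ∈ S)
    (N : Submodule R M)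
    (hN : ∀ k : ℕ, 1 ≤ k → ¬ SFinSub (s ^ k) N)
    (hmax : ∀ N' : Submodule R M, (∀ k : ℕ, 1 ≤ k → ¬ SFinSub (s ^ k) N') →
      N ≤ N' → N = N') :
    ∀ x : M, (∃ t : R, t ∉ N.colon ⊤ ∧ t • x ∈ (N.colon ⊤) • (⊤ : Submodule R M)) →
      x ∈ N := by
  rintro x ⟨t, ht, htx⟩
  by_contra hx
  have hpM : (N.colon ⊤) • (⊤ : Submodule R M) ≤ N := by
    rw [Submodule.smul_le]
    intro r hr m _
    exact Submodule.mem_colon.mp hr m trivial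
  have htxN : t • x ∈ N := hpM htx
  set N₁ := N.comap (LinearMap.lsmul R M t) with hN₁def
  have hNle₁ : N ≤ N₁ := fun n hn => N.smul_mem t hn
  have hNne₁ : N ≠ N₁ := fun h => hx (by rw [h]; exact htxN)
  have h₁ : ¬ (∀ k : ℕ, 1 ≤ k → ¬ SFinSub (s ^ k) N₁) :=
    fun h => hNne₁ (hmax N₁ h hNle₁)
  push_neg at h₁
  obtain ⟨k, hk, G, hGfg, hGle, hG⟩ := h₁
  set N₂ := N ⊔ Submodule.map (LinearMap.lsmul R M t) ⊤ with hN₂def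
  have hNle₂ : N ≤ N₂ := le_sup_left
  have hNne₂ : N ≠ N₂ := by
    intro h
    apply ht
    rw [Submodule.mem_colon]
    intro m _
    have hm : t • m ∈ N₂ := Submodule.mem_sup_right ⟨m, trivial, rfl⟩
    rw [← h] at hm
    exact hm
  have h₂ : ¬ (∀ k : ℕ, 1 ≤ k → ¬ SFinSub (s ^ k) N₂) :=
    fun h => hNne₂ (hmax N₂ h hNle₂)
  push_neg at h₂
  obtain ⟨l, hl, H, hHfg, hHle, hH⟩ := h₂
  obtain ⟨W, hWfg, hWle, hHW⟩ :=
    fg_sup_split N (Submodule.map (LinearMap.lsmul R M t) ⊤) H hHfg (le_trans hHle le_rfl)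
  refine hN (k + l) (by omega)
    ⟨W ⊔ Submodule.map (LinearMap.lsmul R M t) G, (hWfg.sup (hGfg.map _)), ?_, ?_⟩
  · refine sup_le hWle ?_
    rintro _ ⟨g, hg, rfl⟩
    exact hGle hg
  · intro y hy
    have h1 : s ^ l • y ∈ W ⊔ Submodule.map (LinearMap.lsmul R M t) ⊤ :=
      hHW (hH y (hNle₂ hy))
    obtain ⟨w, hw, z, hz, hwz⟩ := Submodule.mem_sup.mp h1
    obtain ⟨m, _, rfl⟩ := hz
    have hmN₁ : m ∈ N₁ := by
      show t • m ∈ N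
      have : (LinearMap.lsmul R M t) m = s ^ l • y - w := by
        rw [← hwz]; abel
      rw [show t • m = (LinearMap.lsmul R M t) m from rfl, this]
      exact Submodule.sub_mem N (N.smul_mem _ hy) (hWle hw)
    have hsm : s ^ k • m ∈ G := hG m hmN₁
    have hz' : ((LinearMap.lsmul R M) t) m = t • m := rfl
    have heq : s ^ (k + l) • y = s ^ k • w + t • (s ^ k • m) := by
      rw [pow_add, mul_smul, ← hwz, hz', smul_add, smul_comm]
    rw [heq]
    exact Submodule.add_mem _ (Submodule.mem_sup_left (W.smul_mem _ hw))
      (Submodule.mem_sup_right ⟨s ^ k • m, hsm, rfl⟩)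
end

section
/- (Cohen type theorem for uniformly S-Noetherian modules) Let R be a commutative ring and S an anti-Archimedean multiplicative subset of R. An R-module M is uniformly S-Noetherian if and only if there exists s ∈ S such that M is s-finite and, for every prime ideal 𝔭 of R containing Ann_R(M), there exists an s-finite submodule N^𝔭 of M with 𝔭M ⊆ N^𝔭 ⊆ M(𝔭), where M(𝔭) = {x ∈ M | tx ∈ 𝔭M for some t ∈ R \ 𝔭}. -/
/-- `S` is anti-Archimedean: for every `s ∈ S`, `(⋂_{n ≥ 1} sⁿR) ∩ S ≠ ∅`. -/
def AntiArchimedean {R : Type*} [CommRing R] (S : Submonoid R) : Prop :=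
  ∀ s ∈ S, ∃ t ∈ S, ∀ n : ℕ, 1 ≤ n → s ^ n ∣ t

section Aux

variable {R M : Type*} [CommRing R] [AddCommGroup M] [Module R M]

/-- If a f.g. submodule `F` sits inside `P ⊔ A`, there is a f.g. `P₁ ≤ P` with
`F ≤ P₁ ⊔ A`. -/
lemma sup_decomp (P A F : Submodule R M) (hF : F.FG) (hle : F ≤ P ⊔ A) :
    ∃ P₁ : Submodule R M, P₁.FG ∧ P₁ ≤ P ∧ F ≤ P₁ ⊔ A := by
  obtain ⟨T, hT⟩ := hF
  have hdec : ∀ f : (T : Set M), ∃ y : M, y ∈ P ∧ (f : M) - y ∈ A := by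
    intro f
    have hf : (f : M) ∈ P ⊔ A := hle (hT ▸ Submodule.subset_span f.2)
    rw [Submodule.mem_sup] at hf
    obtain ⟨y, hy, z, hz, hyz⟩ := hf
    exact ⟨y, hy, by rw [← hyz]; simpa using hz⟩
  choose φ hφP hφA using hdec
  refine ⟨Submodule.span R (Set.range φ), Submodule.fg_span (Set.finite_range _),
    Submodule.span_le.2 ?_, ?_⟩
  · rintro _ ⟨f, rfl⟩; exact hφP f
  · rw [← hT, Submodule.span_le]
    intro f hf
    have hfe : f = φ ⟨f, hf⟩ + (f - φ ⟨f, hf⟩) := by abel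
    rw [hfe]
    exact Submodule.add_mem_sup (Submodule.subset_span ⟨⟨f, hf⟩, rfl⟩) (hφA ⟨f, hf⟩)

lemma sfin_lemA (u v a : R) (P : Submodule R M)
    (h1 : SFinSub u (P ⊔ Submodule.map (LinearMap.lsmul R M a) ⊤))
    (h2 : SFinSub v (Submodule.comap (LinearMap.lsmul R M a) P)) :
    SFinSub (u * v) P := by
  obtain ⟨F₁, hF₁fg, hF₁le, hF₁⟩ := h1
  obtain ⟨F₂, hF₂fg, hF₂le, hF₂⟩ := h2
  obtain ⟨P₁, hP₁fg, hP₁le, hle'⟩ := sup_decomp P _ F₁ hF₁fg hF₁le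
  refine ⟨P₁ ⊔ Submodule.map (LinearMap.lsmul R M a) F₂,
    hP₁fg.sup (hF₂fg.map _), sup_le hP₁le ?_, ?_⟩
  · rw [Submodule.map_le_iff_le_comap]; exact hF₂le
  · intro x hx
    have h4 := hle' (hF₁ x (Submodule.mem_sup_left hx))
    rw [Submodule.mem_sup] at h4
    obtain ⟨y, hy, z, hz, hyz⟩ := h4
    obtain ⟨w, -, hw⟩ := hz
    have hzP : z ∈ P := by
      have hz' : z = u • x - y := by rw [← hyz]; abel
      rw [hz']; exact P.sub_mem (P.smul_mem u hx) (hP₁le hy)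
    have hwz : a • w = z := by simpa using hw
    have hwc : w ∈ Submodule.comap (LinearMap.lsmul R M a) P := by
      simp only [Submodule.mem_comap, LinearMap.lsmul_apply]
      rw [hwz]; exact hzP
    have h5 : (u * v) • x = v • y + a • (v • w) := by
      rw [mul_comm, mul_smul, ← hyz, smul_add, ← hwz]
      exact congrArg (v • y + ·) (smul_comm v a w)
    rw [h5]
    refine Submodule.add_mem _ (Submodule.mem_sup_left (P₁.smul_mem v hy))
      (Submodule.mem_sup_right ?_)
    exact ⟨v • w, hF₂ w hwc, by rw [LinearMap.lsmul_apply]⟩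

lemma sfin_lemC (u v : R) (A N P : Submodule R M) (hNP : N ≤ P)
    (h1 : SFinSub u (P ⊔ A)) (h2 : SFinSub v N)
    (h3 : ∀ y ∈ A, y ∈ P → y ∈ N) : SFinSub (u * v) P := by
  obtain ⟨F₁, hF₁fg, hF₁le, hF₁⟩ := h1
  obtain ⟨F₂, hF₂fg, hF₂le, hF₂⟩ := h2
  obtain ⟨P₁, hP₁fg, hP₁le, hle'⟩ := sup_decomp P A F₁ hF₁fg hF₁le
  refine ⟨P₁ ⊔ F₂, hP₁fg.sup hF₂fg, sup_le hP₁le (hF₂le.trans hNP), ?_⟩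
  intro x hx
  have h4 := hle' (hF₁ x (Submodule.mem_sup_left hx))
  rw [Submodule.mem_sup] at h4
  obtain ⟨y, hy, z, hz, hyz⟩ := h4
  have hzP : z ∈ P := by
    have hz' : z = u • x - y := by rw [← hyz]; abel
    rw [hz']; exact P.sub_mem (P.smul_mem u hx) (hP₁le hy)
  have h5 : (u * v) • x = v • y + v • z := by rw [mul_comm, mul_smul, ← hyz, smul_add]
  rw [h5]
  exact Submodule.add_mem _ (Submodule.mem_sup_left (P₁.smul_mem v hy))
    (Submodule.mem_sup_right (hF₂ z (h3 z hz hzP)))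

end Aux

theorem cohen_uniformly_S_noetherian
    {R M : Type*} [CommRing R] [AddCommGroup M] [Module R M]
    (S : Submonoid R) (hS : AntiArchimedean S) :
    (∃ s ∈ S, ∀ N : Submodule R M, SFinSub s N) ↔
    (∃ s ∈ S, SFinSub s (⊤ : Submodule R M) ∧
      ∀ p : Ideal R, p.IsPrime → (∀ r : R, (∀ m : M, r • m = 0) → r ∈ p) →
        ∃ N : Submodule R M, SFinSub s N ∧
          p • (⊤ : Submodule R M) ≤ N ∧
          ∀ x ∈ N, ∃ t : R, t ∉ p ∧ t • x ∈ p • (⊤ : Submodule R M)) := by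
  constructor
  · rintro ⟨s, hsS, h⟩
    exact ⟨s, hsS, h ⊤, fun p hp _ =>
      ⟨p • ⊤, h _, le_rfl, fun x hx =>
        ⟨1, fun h1 => hp.ne_top ((Ideal.eq_top_iff_one p).mpr h1), by simpa using hx⟩⟩⟩
  · rintro ⟨s, hsS, htop, hps⟩
    obtain ⟨t, htS, ht⟩ := hS s hsS
    suffices h : ∀ N : Submodule R M, ∃ n : ℕ, 1 ≤ n ∧ SFinSub (s ^ n) N by
      refine ⟨t, htS, fun N => ?_⟩
      obtain ⟨n, hn, F, hFfg, hFle, hF⟩ := h N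
      refine ⟨F, hFfg, hFle, fun x hx => ?_⟩
      obtain ⟨r, hr⟩ := ht n hn
      rw [hr, mul_comm, mul_smul]
      exact F.smul_mem r (hF x hx)
    by_contra hcon
    push_neg at hcon
    obtain ⟨N₀, hN₀⟩ := hcon
    set Ω : Set (Submodule R M) := {N | ∀ n : ℕ, 1 ≤ n → ¬ SFinSub (s ^ n) N} with hΩdef
    have hN₀Ω : N₀ ∈ Ω := fun n hn => hN₀ n hn
    have hzorn : ∀ c ⊆ Ω, IsChain (· ≤ ·) c → ∀ y ∈ c, ∃ ub ∈ Ω, ∀ z ∈ c, z ≤ ub := by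
      intro c hcΩ hchain y hyc
      refine ⟨sSup c, ?_, fun z hz => le_sSup hz⟩
      intro n hn hfin
      obtain ⟨F, hFfg, hFle, hF⟩ := hfin
      have hcomp := (Submodule.fg_iff_compact F).1 hFfg
      obtain ⟨N, hNc, hFN⟩ :=
        (CompleteLattice.isCompactElement_iff_le_of_directed_sSup_le _ F).1 hcomp c
          ⟨y, hyc⟩ hchain.directedOn hFle
      exact hcΩ hNc n hn ⟨F, hFfg, hFN, fun x hx => hF x (le_sSup hNc hx)⟩
    obtain ⟨P, -, hP2⟩ := zorn_le_nonempty₀ Ω hzorn N₀ hN₀Ω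
    have hPΩ' : P ∈ Ω := hP2.1
    have hPmax : ∀ z ∈ Ω, P ≤ z → z ≤ P := fun z hz hle => hP2.2 hz hle
    have hPΩ : ∀ n : ℕ, 1 ≤ n → ¬ SFinSub (s ^ n) P := hPΩ'
    have hbig : ∀ Q : Submodule R M, P ≤ Q → Q ≠ P → ∃ n : ℕ, 1 ≤ n ∧ SFinSub (s ^ n) Q := by
      intro Q hPQ hQP
      by_contra hq
      push_neg at hq
      exact hQP (le_antisymm (hPmax Q (fun n hn => hq n hn) hPQ) hPQ)
    have hPne : P ≠ ⊤ := by
      intro h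
      exact hPΩ 1 le_rfl (by rw [h, pow_one]; exact htop)
    set pP : Ideal R := P.colon ⊤ with hpPdef
    have hmem : ∀ r : R, r ∈ pP ↔ ∀ x : M, r • x ∈ P := by
      intro r
      rw [hpPdef, Submodule.mem_colon]
      exact ⟨fun h x => h x trivial, fun h x _ => h x⟩
    have key : ∀ c : R, c ∉ pP → Submodule.comap (LinearMap.lsmul R M c) P ≠ P → False := by
      intro c hc hne
      have hx : ∃ x : M, c • x ∉ P := by
        by_contra h; push_neg at h
        exact hc ((hmem c).2 h)
      obtain ⟨x, hx⟩ := hx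
      have hne1 : P ⊔ Submodule.map (LinearMap.lsmul R M c) ⊤ ≠ P := by
        intro h
        apply hx
        have hmm : c • x ∈ P ⊔ Submodule.map (LinearMap.lsmul R M c) ⊤ :=
          Submodule.mem_sup_right ⟨x, trivial, by simp⟩
        rwa [h] at hmm
      obtain ⟨m, hm1, hm2⟩ := hbig _ le_sup_left hne1
      have hPle : P ≤ Submodule.comap (LinearMap.lsmul R M c) P := fun y hy => by
        simpa using P.smul_mem c hy
      obtain ⟨k, hk1, hk2⟩ := hbig _ hPle hne
      have hfin := sfin_lemA (s ^ m) (s ^ k) c P hm2 hk2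
      rw [← pow_add] at hfin
      exact hPΩ (m + k) (by omega) hfin
    have hpprime : pP.IsPrime := by
      constructor
      · intro h
        apply hPne
        rw [eq_top_iff]
        intro x _
        simpa using (hmem 1).1 (h ▸ Submodule.mem_top) x
      · intro a b hab
        by_contra h
        push_neg at h
        obtain ⟨ha, hb⟩ := h
        apply key a ha
        intro hP
        have hx : ∃ x : M, b • x ∉ P := by
          by_contra h'; push_neg at h'
          exact hb ((hmem b).2 h')
        obtain ⟨x, hx⟩ := hx
        apply hx
        have hmm : b • x ∈ Submodule.comap (LinearMap.lsmul R M a) P := by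
          simp only [Submodule.mem_comap, LinearMap.lsmul_apply]
          rw [smul_smul]
          exact (hmem (a * b)).1 hab x
        rwa [hP] at hmm
    have hann : ∀ r : R, (∀ x : M, r • x = 0) → r ∈ pP := fun r h =>
      (hmem r).2 fun x => by rw [h x]; exact P.zero_mem
    obtain ⟨Np, hNpfin, hpMNp, hNptor⟩ := hps pP hpprime hann
    have hpMP : pP • (⊤ : Submodule R M) ≤ P := by
      rw [Submodule.smul_le]
      intro r hr x _
      exact (hmem r).1 hr x
    by_cases hB : ∀ c : R, c ∉ pP → ∀ y : M, c • y ∈ P → y ∈ P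
    · have hNpP : Np ≤ P := by
        intro x hx
        obtain ⟨c, hc, hcx⟩ := hNptor x hx
        exact hB c hc x (hpMP hcx)
      obtain ⟨m0, hm0⟩ : ∃ m0 : M, m0 ∉ P := by
        by_contra h; push_neg at h
        exact hPne (eq_top_iff.2 fun x _ => h x)
      have hq : ∀ c : R, c • m0 ∈ P → c ∈ pP := by
        intro c hc
        by_contra hcp
        exact hm0 (hB c hcp m0 hc)
      have hne1 : P ⊔ Submodule.span R {m0} ≠ P := by
        intro h
        apply hm0
        have hmm : m0 ∈ P ⊔ Submodule.span R {m0} :=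
          Submodule.mem_sup_right (Submodule.mem_span_singleton_self m0)
        rwa [h] at hmm
      obtain ⟨k, hk1, hk2⟩ := hbig _ le_sup_left hne1
      have h3 : ∀ y ∈ Submodule.span R {m0}, y ∈ P → y ∈ Np := by
        intro y hy hyP
        obtain ⟨r, rfl⟩ := Submodule.mem_span_singleton.1 hy
        exact hpMNp (Submodule.smul_mem_smul (hq r hyP) Submodule.mem_top)
      have hfin := sfin_lemC (s ^ k) s (Submodule.span R {m0}) Np P hNpP hk2 hNpfin h3
      rw [← pow_succ] at hfin
      exact hPΩ (k + 1) (by omega) hfin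
    · push_neg at hB
      obtain ⟨c, hc, y, hcy, hy⟩ := hB
      apply key c hc
      intro hP
      apply hy
      have hmm : y ∈ Submodule.comap (LinearMap.lsmul R M c) P := by simpa using hcy
      rwa [hP] at hmm
end

section
/- Let R be a commutative ring and M a finitely generated R-module. Then M is a Noetherian R-module if and only if for every prime ideal 𝔭 of R with Ann_R(M) ⊆ 𝔭, there exists a finitely generated submodule N^𝔭 of M such that 𝔭M ⊆ N^𝔭 ⊆ M(𝔭), where M(𝔭) = {x ∈ M | tx ∈ 𝔭M for some t ∈ R \ 𝔭}. -/
/-!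
If `M` is not Noetherian, Zorn's lemma gives a submodule `N` maximal among those that are not
finitely generated. If `t • x ∈ N` for some `x ∉ N`, then `t • M ⊆ N`: otherwise `N ⊔ t • M` and
`N :ₘ t` both strictly contain `N`, hence are finitely generated, and then so is `N`, being an
extension of `N ⊓ t • M = t • (N :ₘ t)` by `(N ⊔ t • M) / t • M`. Consequently `p = N : M` is a
prime containing `Ann M`, and every `N₀` as in the condition satisfies `p • M ≤ N₀ ≤ N`. For
`y ∉ N` modularity gives `N ⊓ (N₀ ⊔ R y) = N₀`, so the same extension argument makes `N` finitely
generated, a contradiction.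
-/

open Submodule

namespace Submodule

theorem fg_of_fg_sup_of_fg_inf {R M : Type*} [Ring R] [AddCommGroup M] [Module R M]
    {N L : Submodule R M} (hsup : (N ⊔ L).FG) (hinf : (N ⊓ L).FG) : N.FG := by
  refine fg_of_fg_map_of_fg_inf_ker L.mkQ ?_ (by rwa [ker_mkQ])
  have : (N ⊔ L).map L.mkQ = N.map L.mkQ := by rw [map_sup, mkQ_map_self, sup_bot_eq]
  exact this ▸ hsup.map _

theorem exists_maximal_not_fg_of_not_isNoetherian {R M : Type*} [Semiring R] [AddCommMonoid M]
    [Module R M] (h : ¬IsNoetherian R M) : ∃ N : Submodule R M, Maximal (fun P ↦ ¬P.FG) N := by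
  obtain ⟨N₁, hN₁⟩ := not_forall.1 (mt isNoetherian_def.2 h)
  have hsSup : ∀ c ⊆ {P : Submodule R M | ¬P.FG}, IsChain (· ≤ ·) c → c.Nonempty →
      ¬(sSup c).FG := by
    rintro c hc hchain hne hfg
    obtain ⟨Q, hQ, hle⟩ := (CompleteLattice.isCompactElement_iff_le_of_directed_sSup_le _ _).1
      ((fg_iff_compact _).1 hfg) c hne hchain.directedOn le_rfl
    exact hc hQ (le_antisymm (le_sSup hQ) hle ▸ hfg)
  obtain ⟨N, -, hN⟩ := zorn_le_nonempty₀ {P : Submodule R M | ¬P.FG}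
    (fun c hc hc' P hP ↦ ⟨sSup c, hsSup c hc hc' ⟨P, hP⟩, fun _ ↦ le_sSup⟩) N₁ hN₁
  exact ⟨N, hN⟩

section MaximalNotFG

variable {R M : Type*} [CommRing R] [AddCommGroup M] [Module R M] {N : Submodule R M}

theorem fg_of_maximal_not_fg_of_lt (hN : Maximal (fun P ↦ ¬P.FG) N) {P : Submodule R M}
    (h : N < P) : P.FG :=
  not_not.1 (hN.not_prop_of_gt h)

theorem ne_top_of_maximal_not_fg [Module.Finite R M] (hN : Maximal (fun P ↦ ¬P.FG) N) :
    N ≠ ⊤ :=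
  fun h ↦ hN.prop (h ▸ Module.Finite.fg_top)

theorem mem_colon_of_maximal_not_fg (hN : Maximal (fun P ↦ ¬P.FG) N) {t : R} {x : M}
    (hx : x ∉ N) (htx : t • x ∈ N) : t ∈ N.colon Set.univ := by
  by_contra ht
  obtain ⟨m, -, hm⟩ := not_forall₂.1 (mt mem_colon.2 ht)
  set f : M →ₗ[R] M := t • LinearMap.id
  refine hN.prop (fg_of_fg_sup_of_fg_inf (L := LinearMap.range f)
    (fg_of_maximal_not_fg_of_lt hN (left_lt_sup.2 fun h ↦ hm (h ⟨m, rfl⟩))) ?_)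
  rw [inf_comm, ← map_comap_eq]
  exact (fg_of_maximal_not_fg_of_lt hN (lt_of_le_of_ne (fun n hn ↦ N.smul_mem t hn)
    fun h ↦ hx (h ▸ htx))).map f

theorem isPrime_colon_of_maximal_not_fg [Module.Finite R M] (hN : Maximal (fun P ↦ ¬P.FG) N) :
    (N.colon Set.univ).IsPrime := by
  refine ⟨fun h ↦ ne_top_of_maximal_not_fg hN (eq_top_iff.2 fun m _ ↦ ?_), fun {a b} hab ↦ ?_⟩
  · simpa using mem_colon.1 (h ▸ Submodule.mem_top : (1 : R) ∈ N.colon Set.univ) m trivial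
  refine or_iff_not_imp_right.2 fun hb ↦ ?_
  obtain ⟨m, -, hm⟩ := not_forall₂.1 (mt mem_colon.2 hb)
  exact mem_colon_of_maximal_not_fg hN hm (smul_smul a b m ▸ mem_colon.1 hab m trivial)

theorem colon_univ_smul_top_le (N : Submodule R M) : N.colon Set.univ • (⊤ : Submodule R M) ≤ N :=
  smul_le.2 fun _ hr m _ ↦ mem_colon.1 hr m trivial

theorem le_of_maximal_not_fg (hN : Maximal (fun P ↦ ¬P.FG) N) {N₀ : Submodule R M}
    (hN₀ : ∀ x ∈ N₀, ∃ t ∉ N.colon Set.univ, t • x ∈ N.colon Set.univ • (⊤ : Submodule R M)) :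
    N₀ ≤ N := fun x hx ↦ by
  obtain ⟨t, ht, htx⟩ := hN₀ x hx
  by_contra hxN
  exact ht (mem_colon_of_maximal_not_fg hN hxN (colon_univ_smul_top_le N htx))

theorem inf_span_singleton_le_colon_univ_smul_top (hN : Maximal (fun P ↦ ¬P.FG) N) {y : M}
    (hy : y ∉ N) : span R {y} ⊓ N ≤ N.colon Set.univ • (⊤ : Submodule R M) := by
  rintro _ ⟨hz, hzN⟩
  obtain ⟨c, rfl⟩ := mem_span_singleton.1 hz
  exact smul_mem_smul (mem_colon_of_maximal_not_fg hN hy hzN) trivial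

theorem not_fg_of_maximal_not_fg_of_le [Module.Finite R M] (hN : Maximal (fun P ↦ ¬P.FG) N)
    {N₀ : Submodule R M} (hle : N₀ ≤ N) (hN₀ : N.colon Set.univ • (⊤ : Submodule R M) ≤ N₀) :
    ¬N₀.FG := by
  intro hfg
  obtain ⟨y, hy⟩ := SetLike.exists_not_mem_of_ne_top N (ne_top_of_maximal_not_fg hN) (by simp)
  have hinf : N ⊓ (N₀ ⊔ span R {y}) = N₀ := by
    rw [inf_comm, sup_inf_assoc_of_le _ hle]
    exact sup_eq_left.2 ((inf_span_singleton_le_colon_univ_smul_top hN hy).trans hN₀)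
  refine hN.prop (fg_of_fg_sup_of_fg_inf (L := N₀ ⊔ span R {y}) ?_ (by rwa [hinf]))
  rw [← sup_assoc, sup_eq_left.2 hle]
  exact fg_of_maximal_not_fg_of_lt hN (left_lt_sup.2 fun h ↦ hy (h (mem_span_singleton_self y)))

end MaximalNotFG

end Submodule

theorem noetherian_iff_cohen_condition
    {R M : Type*} [CommRing R] [AddCommGroup M] [Module R M]
    (hfg : Module.Finite R M) :
    IsNoetherian R M ↔
    (∀ p : Ideal R, p.IsPrime → (∀ r : R, (∀ m : M, r • m = 0) → r ∈ p) →
      ∃ N : Submodule R M, N.FG ∧ p • (⊤ : Submodule R M) ≤ N ∧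
        ∀ x ∈ N, ∃ t : R, t ∉ p ∧ t • x ∈ p • (⊤ : Submodule R M)) := by
  refine ⟨fun _ p hp _ ↦ ⟨p • ⊤, IsNoetherian.noetherian _, le_rfl, fun x hx ↦
    ⟨1, (Ideal.ne_top_iff_one p).1 hp.ne_top, by rwa [one_smul]⟩⟩, fun h ↦ ?_⟩
  by_contra hM
  obtain ⟨N, hN⟩ := exists_maximal_not_fg_of_not_isNoetherian hM
  obtain ⟨N₀, hfg₀, hN₀, hsat⟩ := h (N.colon Set.univ) (isPrime_colon_of_maximal_not_fg hN)
    fun r hr ↦ mem_colon.2 fun m _ ↦ hr m ▸ N.zero_mem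
  exact not_fg_of_maximal_not_fg_of_le hN (le_of_maximal_not_fg hN hsat) hN₀ hfg₀
end

section
/- Let R be a commutative ring, S a multiplicative subset of R, and T a ring extension of R which is S-finite as an R-module. If R is a uniformly S-Noetherian ring, then T is a uniformly S-Noetherian ring. -/
/-!
Choosing generators `g₁, …, gₙ` of a finitely generated `F` with `s' T ⊆ F ⊆ T` gives an
`R`-linear map `Rⁿ → T` whose range contains `s' T`. Since `R` is uniformly `s`-Noetherian,
induction along `0 → R → Rⁿ⁺¹ → Rⁿ → 0` makes `Rⁿ` uniformly `sⁿ`-Noetherian, and pulling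
back along `Rⁿ → T` makes every `R`-submodule of `T`, in particular every ideal `J`,
`sⁿ s'`-finite. The `R`-generators of such an `R`-submodule of `J` then generate an ideal
of `T` doing the same job.
-/

open Submodule

def IsUniformlySNoetherian (R M : Type*) [CommRing R] [AddCommGroup M] [Module R M] (s : R) :
    Prop :=
  ∀ N : Submodule R M, SFinSub s N

section

variable {R M E M' : Type*} [CommRing R] [AddCommGroup M] [Module R M]
  [AddCommGroup E] [Module R E] [AddCommGroup M'] [Module R M']

lemma Submodule.exists_fg_le_and_le_map {F : Submodule R M'} {P : Submodule R E}
    (g : E →ₗ[R] M') (hF : F.FG) (hle : F ≤ P.map g) :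
    ∃ L : Submodule R E, L.FG ∧ L ≤ P ∧ F ≤ L.map g := by
  obtain ⟨G, hGfin, rfl⟩ := fg_def.1 hF
  have hG : G ⊆ g '' P := subset_span.trans hle
  obtain ⟨t, htP, htfin, rfl⟩ :=
    Set.exists_subset_image_finite_and.1 ⟨G, hG, hGfin, rfl⟩
  exact ⟨span R t, fg_def.2 ⟨t, htfin, rfl⟩, span_le.2 htP, (map_span g t).ge⟩

lemma IsUniformlySNoetherian.of_ker_le_range {s s' : R} (f : M →ₗ[R] E) (g : E →ₗ[R] M')
    (hfg : LinearMap.ker g ≤ LinearMap.range f) (hM : IsUniformlySNoetherian R M s)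
    (hM' : IsUniformlySNoetherian R M' s') : IsUniformlySNoetherian R E (s * s') := by
  intro P
  obtain ⟨F', hF'fg, hF'le, hF'⟩ := hM' (P.map g)
  obtain ⟨L, hLfg, hLP, hF'L⟩ := exists_fg_le_and_le_map g hF'fg hF'le
  obtain ⟨F₀, hF₀fg, hF₀le, hF₀⟩ := hM (P.comap f)
  refine ⟨L ⊔ F₀.map f, hLfg.sup (hF₀fg.map f), sup_le hLP (map_le_iff_le_comap.2 hF₀le), ?_⟩
  intro w hw
  obtain ⟨u, huL, hu⟩ := hF'L (hF' _ (mem_map_of_mem hw))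
  obtain ⟨v, hv⟩ := hfg (show s' • w - u ∈ LinearMap.ker g by simp [hu])
  have hvP : v ∈ P.comap f := by
    rw [mem_comap, hv]
    exact P.sub_mem (P.smul_mem s' hw) (hLP huL)
  have hsw : (s * s') • w = s • u + f (s • v) := by
    rw [map_smul, hv, mul_smul, smul_sub]
    abel
  rw [hsw]
  exact add_mem (mem_sup_left (L.smul_mem s huL)) (mem_sup_right (mem_map_of_mem (hF₀ v hvP)))

lemma IsUniformlySNoetherian.of_smul_mem_range {s s' : R} (f : M →ₗ[R] E)
    (hf : ∀ x, s' • x ∈ LinearMap.range f) (hM : IsUniformlySNoetherian R M s) :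
    IsUniformlySNoetherian R E (s * s') := by
  intro P
  obtain ⟨F, hFfg, hFle, hF⟩ := hM (P.comap f)
  refine ⟨F.map f, hFfg.map f, map_le_iff_le_comap.2 hFle, fun x hx => ?_⟩
  obtain ⟨v, hv⟩ := hf x
  have hvP : v ∈ P.comap f := by
    rw [mem_comap, hv]
    exact P.smul_mem s' hx
  rw [mul_smul, ← hv, ← map_smul]
  exact mem_map_of_mem (hF v hvP)

lemma IsUniformlySNoetherian.pi_fin {s : R} (hR : IsUniformlySNoetherian R R s) :
    ∀ n : ℕ, IsUniformlySNoetherian R (Fin n → R) (s ^ n)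
  | 0 => fun _ => ⟨⊥, fg_bot, bot_le, fun x _ => by simp [Subsingleton.elim x 0]⟩
  | n + 1 => by
    -- `R → R^(n+1) → R^n`: first coordinate in, tail out.
    have hexact : LinearMap.ker (LinearMap.funLeft R R (Fin.succ (n := n))) ≤
        LinearMap.range (LinearMap.single R (fun _ : Fin (n + 1) => R) 0) := by
      intro v hv
      refine ⟨v 0, funext fun i => Fin.cases (by simp) (fun j => ?_) i⟩
      simpa [eq_comm] using congr_fun hv j
    rw [pow_succ']
    exact hR.of_ker_le_range _ _ hexact (pi_fin hR n)

lemma IsUniformlySNoetherian.of_sFinSub_top {s s' : R} (hR : IsUniformlySNoetherian R R s)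
    (hM : SFinSub s' (⊤ : Submodule R M)) :
    ∃ n : ℕ, IsUniformlySNoetherian R M (s ^ n * s') := by
  obtain ⟨F, hFfg, -, hF⟩ := hM
  obtain ⟨n, g, rfl⟩ := fg_iff_exists_fin_generating_family.1 hFfg
  refine ⟨n, (hR.pi_fin n).of_smul_mem_range (Fintype.linearCombination R g) fun x => ?_⟩
  rw [Fintype.range_linearCombination]
  exact hF x trivial

lemma Ideal.exists_fg_of_sFinSub_restrictScalars {T : Type*} [CommRing T] [Algebra R T]
    {s : R} {J : Ideal T} (hJ : SFinSub s (J.restrictScalars R)) :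
    ∃ F : Ideal T, F.FG ∧ F ≤ J ∧ ∀ x ∈ J, algebraMap R T s * x ∈ F := by
  obtain ⟨F, hFfg, hFle, hF⟩ := hJ
  obtain ⟨G, rfl⟩ := hFfg
  refine ⟨Ideal.span G, ⟨G, rfl⟩, Ideal.span_le.2 fun _ hx => hFle (Submodule.subset_span hx),
    fun x hx => ?_⟩
  rw [← Algebra.smul_def]
  exact span_le_restrictScalars R T _ (hF x hx)

end

theorem extension_uniformly_S_noetherian_general
    {R T : Type*} [CommRing R] [CommRing T] [Algebra R T]
    (S : Submonoid R)
    (hTfin : ∃ s ∈ S, SFinSub s (⊤ : Submodule R T))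
    (hR : ∃ s ∈ S, ∀ I : Ideal R, SFinSub s I) :
    ∃ s ∈ S, ∀ J : Ideal T, ∃ F : Ideal T, F.FG ∧ F ≤ J ∧
      ∀ x ∈ J, algebraMap R T s * x ∈ F := by
  obtain ⟨s', hs'S, hT⟩ := hTfin
  obtain ⟨s, hsS, hR⟩ := hR
  obtain ⟨n, hTR⟩ := IsUniformlySNoetherian.of_sFinSub_top hR hT
  exact ⟨s ^ n * s', S.mul_mem (S.pow_mem hsS n) hs'S,
    fun J => Ideal.exists_fg_of_sFinSub_restrictScalars (hTR (J.restrictScalars R))⟩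

theorem extension_uniformly_S_noetherian
    {R T : Type*} [CommRing R] [CommRing T] [Algebra R T]
    (hinj : Function.Injective (algebraMap R T))
    (S : Submonoid R)
    (hTfin : ∃ s ∈ S, SFinSub s (⊤ : Submodule R T))
    (hR : ∃ s ∈ S, ∀ I : Ideal R, SFinSub s I) :
    ∃ s ∈ S, ∀ J : Ideal T, ∃ F : Ideal T, F.FG ∧ F ≤ J ∧
      ∀ x ∈ J, algebraMap R T s * x ∈ F :=
  extension_uniformly_S_noetherian_general S hTfin hR
end

section
/- Let R be a commutative ring, S a multiplicative subset of R, and M an S-faithful R-module. If M is a uniformly S-Noetherian R-module, then R is a uniformly S-Noetherian ring. -/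
private lemma aux_list {R M : Type*} [CommRing R] [AddCommGroup M] [Module R M]
    (S : Submonoid R) {s : R} (hs : s ∈ S)
    (hM : ∀ N : Submodule R M, SFinSub s N) (l : List M) :
    ∃ s' ∈ S, ∀ I : Ideal R, ∃ F : Ideal R, F.FG ∧ F ≤ I ∧
      ∀ x ∈ I, ∃ y ∈ F, ∀ m ∈ l, (s' * x - y) • m = 0 := by
  induction l with
  | nil =>
      refine ⟨1, S.one_mem, fun I => ⟨⊥, Submodule.fg_bot, bot_le, fun x hx => ⟨0, Submodule.zero_mem _, by simp⟩⟩⟩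
  | cons m₀ l' ih =>
      obtain ⟨s', hs', H⟩ := ih
      refine ⟨s * s', S.mul_mem hs hs', fun I => ?_⟩
      obtain ⟨F', hF'fg, hF'le, hF'⟩ := H I
      -- the ideal of elements of I killing all of l'
      set K : Ideal R := ⨅ m ∈ l', LinearMap.ker (LinearMap.toSpanSingleton R M m) with hK
      have hKmem : ∀ a : R, a ∈ K ↔ ∀ m ∈ l', a • m = 0 := by
        intro a
        simp [hK, Submodule.mem_iInf, LinearMap.mem_ker]
      set J : Ideal R := I ⊓ K with hJ
      set N : Submodule R M := Submodule.map (LinearMap.toSpanSingleton R M m₀) J with hN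
      obtain ⟨G, hGfg, hGle, hGmem⟩ := hM N
      obtain ⟨T, hT⟩ := hGfg
      -- choose preimages in J for elements of N
      have hchoice : ∀ g : M, ∃ a : R, g ∈ N → a ∈ J ∧ a • m₀ = g := by
        intro g
        by_cases hg : g ∈ N
        · obtain ⟨a, ha, hag⟩ := Submodule.mem_map.mp hg
          exact ⟨a, fun _ => ⟨ha, hag⟩⟩
        · exact ⟨0, fun h => absurd h hg⟩
      choose f hf using hchoice
      set A : Ideal R := Ideal.span (f '' ↑T) with hA
      have hAfg : A.FG := Submodule.fg_span ((T.finite_toSet).image f)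
      have hAJ : A ≤ J := by
        rw [hA, Ideal.span_le]
        rintro a ⟨g, hg, rfl⟩
        have hgN : g ∈ N := hGle (hT ▸ Submodule.subset_span hg)
        exact (hf g hgN).1
      have hGA : ∀ g ∈ G, ∃ u ∈ A, u • m₀ = g := by
        intro g hg
        rw [← hT] at hg
        induction hg using Submodule.span_induction with
        | mem g hg =>
            have hgN : g ∈ N := hGle (hT ▸ Submodule.subset_span hg)
            exact ⟨f g, Ideal.subset_span ⟨g, hg, rfl⟩, (hf g hgN).2⟩
        | zero => exact ⟨0, Submodule.zero_mem _, by simp⟩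
        | add g₁ g₂ _ _ h1 h2 =>
            obtain ⟨u₁, hu₁, hu₁'⟩ := h1
            obtain ⟨u₂, hu₂, hu₂'⟩ := h2
            exact ⟨u₁ + u₂, Submodule.add_mem _ hu₁ hu₂, by rw [add_smul, hu₁', hu₂']⟩
        | smul c g _ h =>
            obtain ⟨u, hu, hu'⟩ := h
            exact ⟨c * u, Ideal.mul_mem_left _ _ hu, by rw [mul_smul, hu']⟩
      refine ⟨F' ⊔ A, Submodule.FG.sup hF'fg hAfg, sup_le hF'le (hAJ.trans inf_le_left), fun x hx => ?_⟩
      obtain ⟨y, hy, hyl⟩ := hF' x hx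
      have hrJ : s' * x - y ∈ J := by
        rw [hJ]
        refine ⟨I.sub_mem (I.mul_mem_left _ hx) (hF'le hy), (hKmem _).mpr hyl⟩
      have hrN : (s' * x - y) • m₀ ∈ N := Submodule.mem_map.mpr ⟨s' * x - y, hrJ, rfl⟩
      obtain ⟨u, huA, hum⟩ := hGA _ (hGmem _ hrN)
      refine ⟨s • y + u, Submodule.add_mem _
        (Submodule.mem_sup_left (Submodule.smul_mem _ _ hy)) (Submodule.mem_sup_right huA), ?_⟩
      intro m hm
      have hsc : s * s' * x - (s • y + u) = s * (s' * x - y) - u := by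
        simp only [smul_eq_mul]; ring
      rcases List.mem_cons.mp hm with rfl | hm'
      · rw [hsc, sub_smul, mul_smul, ← hum, sub_self]
      · have h1 : (s' * x - y) • m = 0 := hyl m hm'
        have h2 : u • m = 0 := (hKmem u).mp (hAJ huA).2 m hm'
        rw [hsc, sub_smul, mul_smul, h1, h2, smul_zero, sub_zero]

theorem uniformly_S_noetherian_of_S_faithful
    {R M : Type*} [CommRing R] [AddCommGroup M] [Module R M]
    (S : Submonoid R)
    (hfaith : ∃ t ∈ S, ∀ r : R, (∀ m : M, r • m = 0) → t * r = 0)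
    (hM : ∃ s ∈ S, ∀ N : Submodule R M, SFinSub s N) :
    ∃ s ∈ S, ∀ I : Ideal R, SFinSub s I := by
  obtain ⟨t, ht, hfaith⟩ := hfaith
  obtain ⟨s, hs, hM⟩ := hM
  obtain ⟨F₀, hF₀fg, -, hF₀⟩ := hM ⊤
  obtain ⟨T₀, hT₀⟩ := hF₀fg
  obtain ⟨s', hs', H⟩ := aux_list S hs hM T₀.toList
  refine ⟨t * (s * s'), S.mul_mem ht (S.mul_mem hs hs'), fun I => ?_⟩
  obtain ⟨F, hFfg, hFle, hF⟩ := H I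
  refine ⟨F, hFfg, hFle, fun x hx => ?_⟩
  obtain ⟨y, hy, hyl⟩ := hF x hx
  -- r := s' * x - y kills F₀
  have hkill : ∀ z ∈ F₀, (s' * x - y) • z = 0 := by
    intro z hz
    rw [← hT₀] at hz
    induction hz using Submodule.span_induction with
    | mem z hz => exact hyl z (Finset.mem_toList.mpr hz)
    | zero => simp
    | add z₁ z₂ _ _ h1 h2 => rw [smul_add, h1, h2, add_zero]
    | smul c z _ h => rw [smul_comm, h, smul_zero]
  have hann : ∀ m : M, ((s' * x - y) * s) • m = 0 := by
    intro m
    rw [mul_smul]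
    exact hkill _ (hF₀ m trivial)
  have ht0 : t * ((s' * x - y) * s) = 0 := hfaith _ hann
  have heq : (t * (s * s')) • x = (t * s) • y := by
    simp only [smul_eq_mul]
    linear_combination ht0
  rw [heq]
  exact Submodule.smul_mem _ _ hy
end

section
/- Let R be a commutative ring, S a multiplicative subset of R, and M a faithful R-module. If M is a uniformly S-Noetherian R-module, then R is a uniformly S-Noetherian ring. -/
lemma sfin_aux {R M : Type*} [CommRing R] [AddCommGroup M] [Module R M]
    (s : R) (h : ∀ N : Submodule R M, SFinSub s N) :
    ∀ (L : List M) (I : Ideal R), ∃ F : Ideal R, F.FG ∧ F ≤ I ∧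
      ∀ x ∈ I, ∃ y ∈ F, (s ^ L.length * x - y) ∈ I ∧
        ∀ m ∈ L, (s ^ L.length * x - y) • m = 0 := by
  classical
  intro L
  induction L with
  | nil =>
    intro I
    refine ⟨⊥, Submodule.fg_bot, bot_le, fun x hx => ⟨0, Submodule.zero_mem _, ?_, ?_⟩⟩
    · simpa using hx
    · simp
  | cons m L' ih =>
    intro I
    obtain ⟨F', hF'fg, hF'le, hF'⟩ := ih I
    set J : Ideal R := I ⊓ ⨅ m' ∈ L', LinearMap.ker (LinearMap.toSpanSingleton R M m')
      with hJ
    have hmemJ : ∀ r : R, r ∈ J ↔ r ∈ I ∧ ∀ m' ∈ L', r • m' = 0 := by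
      intro r
      simp [hJ, Submodule.mem_iInf, LinearMap.mem_ker, LinearMap.toSpanSingleton_apply]
    set φ := LinearMap.toSpanSingleton R M m with hφ
    obtain ⟨G, hGfg, hGle, hG⟩ := h (Submodule.map φ J)
    obtain ⟨T, hT⟩ := hGfg
    have key : ∀ t ∈ T, ∃ r ∈ J, r • m = t := by
      intro t ht
      have : (t : M) ∈ Submodule.map φ J := hGle (hT ▸ Submodule.subset_span ht)
      obtain ⟨r, hrJ, hr⟩ := this
      exact ⟨r, hrJ, by simpa [hφ, LinearMap.toSpanSingleton_apply] using hr⟩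
    choose! f hfJ hfm using key
    set A : Set R := f '' ↑T with hA
    set F₂ : Ideal R := Ideal.span A with hF₂
    have hF₂fg : F₂.FG := ⟨T.image f, by rw [Finset.coe_image]⟩
    have hAJ : A ⊆ (J : Set R) := by
      rintro _ ⟨t, ht, rfl⟩; exact hfJ t ht
    have hF₂J : F₂ ≤ J := Submodule.span_le.mpr hAJ
    have hGmap : G ≤ Submodule.map φ F₂ := by
      rw [← hT, hF₂, Ideal.span, Submodule.map_span]
      apply Submodule.span_mono
      intro t ht
      exact ⟨f t, ⟨t, ht, rfl⟩, by simp [hφ, LinearMap.toSpanSingleton_apply, hfm t ht]⟩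
    refine ⟨F' ⊔ F₂, Submodule.FG.sup hF'fg hF₂fg,
      sup_le hF'le (hF₂J.trans inf_le_left), ?_⟩
    intro x hx
    obtain ⟨y', hy'F, hx₁I, hx₁ann⟩ := hF' x hx
    set x₁ : R := s ^ L'.length * x - y' with hx₁
    have hx₁J : x₁ ∈ J := (hmemJ x₁).mpr ⟨hx₁I, hx₁ann⟩
    have hmem : s • (x₁ • m) ∈ G := hG _ (Submodule.mem_map_of_mem hx₁J)
    have : (s * x₁) • m ∈ Submodule.map φ F₂ := by
      apply hGmap
      simpa [mul_smul] using hmem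
    obtain ⟨b, hbF₂, hbm⟩ := this
    have hbm' : b • m = (s * x₁) • m := by
      simpa [hφ, LinearMap.toSpanSingleton_apply] using hbm
    refine ⟨s * y' + b, Submodule.add_mem _
      (Submodule.mem_sup_left (Ideal.mul_mem_left _ s hy'F))
      (Submodule.mem_sup_right hbF₂), ?_, ?_⟩
    · have hz : s ^ (m :: L').length * x - (s * y' + b) = s * x₁ - b := by
        simp only [List.length_cons, hx₁, pow_succ]
        ring
      rw [hz]
      exact Ideal.sub_mem _ (Ideal.mul_mem_left _ s hx₁I) ((hF₂J.trans inf_le_left) hbF₂)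
    · intro m' hm'
      have hz : s ^ (m :: L').length * x - (s * y' + b) = s * x₁ - b := by
        simp only [List.length_cons, hx₁, pow_succ]
        ring
      rw [hz, sub_smul]
      rcases List.mem_cons.mp hm' with rfl | hm'
      · rw [hbm', sub_self]
      · have h1 : x₁ • m' = 0 := hx₁ann m' hm'
        have h2 : b • m' = 0 := ((hmemJ b).mp (hF₂J hbF₂)).2 m' hm'
        rw [mul_smul, h1, smul_zero, h2, sub_zero]

theorem uniformly_S_noetherian_of_faithful
    {R M : Type*} [CommRing R] [AddCommGroup M] [Module R M]
    (S : Submonoid R)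
    (hfaith : ∀ r : R, (∀ m : M, r • m = 0) → r = 0)
    (hM : ∃ s ∈ S, ∀ N : Submodule R M, SFinSub s N) :
    ∃ s ∈ S, ∀ I : Ideal R, SFinSub s I := by
  obtain ⟨s, hs, h⟩ := hM
  obtain ⟨F₀, hF₀fg, -, hF₀⟩ := h ⊤
  obtain ⟨T₀, hT₀⟩ := hF₀fg
  set L := T₀.toList with hL
  refine ⟨s ^ (L.length + 1), pow_mem hs _, ?_⟩
  intro I
  obtain ⟨F, hfg, hle, hkey⟩ := sfin_aux s h L I
  refine ⟨F, hfg, hle, ?_⟩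
  intro x hx
  obtain ⟨y, hyF, hzI, hzann⟩ := hkey x hx
  set z : R := s ^ L.length * x - y with hz
  have hzkill : ∀ v ∈ F₀, z • v = 0 := by
    rw [← hT₀]
    intro v hv
    induction hv using Submodule.span_induction with
    | mem v hv => exact hzann v (by simpa [hL] using hv)
    | zero => simp
    | add a b _ _ ha hb => rw [smul_add, ha, hb, add_zero]
    | smul r a _ ha => rw [smul_comm, ha, smul_zero]
  have hsz : s * z = 0 := by
    apply hfaith
    intro mm
    have : z • (s • mm) = 0 := hzkill _ (hF₀ mm trivial)
    rwa [smul_comm, ← mul_smul] at this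
  have : s ^ (L.length + 1) • x = s * y + s * z := by
    simp only [smul_eq_mul, hz, pow_succ]
    ring
  rw [this, hsz, add_zero]
  exact Ideal.mul_mem_left _ s hyF
end

section
/- Let R be a commutative ring, S a multiplicative subset of R, and M an S-faithful R-module. If M is an S-Noetherian R-module, then R is an S-Noetherian ring. -/
section Aux

variable {R : Type*} [CommRing R] (S : Submonoid R)

/-- The property that every submodule is `s`-finite for some `s ∈ S`. -/
def SNoeth (X : Type*) [AddCommGroup X] [Module R X] : Prop :=
  ∀ N : Submodule R X, ∃ s ∈ S, SFinSub s N

lemma sNoeth_of_equiv {X Y : Type*} [AddCommGroup X] [Module R X]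
    [AddCommGroup Y] [Module R Y] (e : X ≃ₗ[R] Y)
    (hX : SNoeth S X) : SNoeth S Y := by
  intro N
  obtain ⟨s, hs, F, hFG, hFle, hF⟩ := hX (N.comap (e : X →ₗ[R] Y))
  refine ⟨s, hs, F.map (e : X →ₗ[R] Y), hFG.map _, ?_, ?_⟩
  · rintro y ⟨x, hx, rfl⟩
    exact hFle hx
  · intro y hy
    have hx : e.symm y ∈ N.comap (e : X →ₗ[R] Y) := by
      simp [Submodule.mem_comap, hy]
    refine ⟨s • e.symm y, hF _ hx, ?_⟩
    simp [map_smul]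

lemma sNoeth_prod {A B : Type*} [AddCommGroup A] [Module R A]
    [AddCommGroup B] [Module R B] (hA : SNoeth S A) (hB : SNoeth S B) :
    SNoeth S (A × B) := by
  intro N
  obtain ⟨s₂, hs₂, F₂, hF₂G, hF₂le, hF₂⟩ := hB (N.map (LinearMap.snd R A B))
  obtain ⟨s₁, hs₁, F₁, hF₁G, hF₁le, hF₁⟩ := hA (N.comap (LinearMap.inl R A B))
  obtain ⟨T, rfl⟩ := hF₂G
  -- lift generators of F₂ to N
  have hlift : ∀ g ∈ T, ∃ z : A × B, z ∈ N ∧ z.2 = g := by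
    intro g hg
    obtain ⟨z, hz, hz2⟩ := hF₂le (Submodule.subset_span hg)
    exact ⟨z, hz, hz2⟩
  choose lift hliftN hlift2 using hlift
  classical
  set L : Set (A × B) := (fun g : T => lift g.1 g.2) '' Set.univ with hL
  have hLfin : L.Finite := Set.toFinite _
  have hLN : Submodule.span R L ≤ N := by
    rw [Submodule.span_le]
    rintro z ⟨⟨g, hg⟩, -, rfl⟩
    exact hliftN g hg
  have hmapL : Submodule.span R (T : Set B) ≤
      (Submodule.span R L).map (LinearMap.snd R A B) := by
    rw [Submodule.span_le]
    intro g hg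
    exact ⟨lift g hg, Submodule.subset_span ⟨⟨g, hg⟩, trivial, rfl⟩, hlift2 g hg⟩
  refine ⟨s₁ * s₂, mul_mem hs₁ hs₂,
    Submodule.span R L ⊔ F₁.map (LinearMap.inl R A B),
    Submodule.FG.sup ⟨hLfin.toFinset, by simp⟩ (hF₁G.map _), ?_, ?_⟩
  · refine sup_le hLN ?_
    rintro z ⟨a, ha, rfl⟩
    exact hF₁le ha
  · intro x hx
    have hb : s₂ • x.2 ∈ Submodule.span R (T : Set B) :=
      hF₂ _ ⟨x, hx, rfl⟩
    obtain ⟨z, hzL, hz2⟩ := hmapL hb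
    have hw : s₂ • x - z ∈ N := sub_mem (Submodule.smul_mem _ _ hx) (hLN hzL)
    have hz2' : z.2 = s₂ • x.2 := hz2
    have hw2 : (s₂ • x - z).2 = 0 := by
      simp [hz2']
    have hinl : (LinearMap.inl R A B) (s₂ • x - z).1 = s₂ • x - z := by
      ext
      · rfl
      · simpa using hw2.symm
    have hw1 : (s₂ • x - z).1 ∈ N.comap (LinearMap.inl R A B) := by
      rw [Submodule.mem_comap, hinl]
      exact hw
    have h1 : s₁ • (s₂ • x - z).1 ∈ F₁ := hF₁ _ hw1
    have key : (s₁ * s₂) • x = s₁ • z +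
        (LinearMap.inl R A B) (s₁ • (s₂ • x - z).1) := by
      rw [map_smul, hinl, mul_smul, smul_sub]
      abel
    rw [key]
    exact add_mem (Submodule.mem_sup_left (Submodule.smul_mem _ _ hzL))
      (Submodule.mem_sup_right ⟨_, h1, rfl⟩)

lemma sNoeth_pi {M : Type*} [AddCommGroup M] [Module R M]
    (hM : SNoeth S M) (n : ℕ) : SNoeth S (Fin n → M) := by
  induction n with
  | zero =>
    intro N
    refine ⟨1, one_mem S, ⊥, Submodule.fg_bot, bot_le, ?_⟩
    intro x hx
    have : x = 0 := funext fun i => absurd i.2 (by omega)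
    simp [this]
  | succ n ih =>
    have e : (M × (Fin n → M)) ≃ₗ[R] (Fin (n + 1) → M) :=
      { toFun := fun p => Fin.cons p.1 p.2
        invFun := fun f => (f 0, fun i => f i.succ)
        map_add' := by
          intro p q
          funext i
          refine Fin.cases ?_ (fun j => ?_) i <;> simp
        map_smul' := by
          intro c p
          funext i
          refine Fin.cases ?_ (fun j => ?_) i <;> simp
        left_inv := by
          intro p
          simp
        right_inv := by
          intro f
          funext i
          refine Fin.cases ?_ (fun j => ?_) i <;> simp }
    exact sNoeth_of_equiv S e (sNoeth_prod S hM ih)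

end Aux

theorem S_noetherian_of_S_faithful
    {R M : Type*} [CommRing R] [AddCommGroup M] [Module R M]
    (S : Submonoid R)
    (hfaith : ∃ t ∈ S, ∀ r : R, (∀ m : M, r • m = 0) → t * r = 0)
    (hM : ∀ N : Submodule R M, ∃ s ∈ S, SFinSub s N) :
    ∀ I : Ideal R, ∃ s ∈ S, SFinSub s I := by
  classical
  obtain ⟨t, htS, ht⟩ := hfaith
  obtain ⟨s, hsS, F₀, hF₀G, -, hF₀⟩ := hM ⊤
  obtain ⟨T₀, hT₀⟩ := hF₀G
  -- enumerate generators of F₀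
  set n := T₀.card with hn
  obtain ⟨m, hm⟩ : ∃ m : Fin n → M, Set.range m = (T₀ : Set M) := by
    obtain ⟨e⟩ := Fintype.truncEquivFinOfCardEq (h := Fintype.card_coe T₀)
    exact ⟨fun i => (e.symm i : M), by
      ext x
      simp only [Set.mem_range]
      constructor
      · rintro ⟨i, rfl⟩; exact (e.symm i).2
      · intro hx; exact ⟨e ⟨x, hx⟩, by simp⟩⟩
  -- the key map R → (Fin n → M)
  set φ : R →ₗ[R] (Fin n → M) :=
    LinearMap.pi fun i => LinearMap.toSpanSingleton R M (m i) with hφ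
  have hφ_apply : ∀ r i, φ r i = r • m i := fun r i => rfl
  -- kernel property
  have hker : ∀ r : R, φ r = 0 → t * (s * r) = 0 := by
    intro r hr
    apply ht
    intro z
    have hz : s • z ∈ F₀ := hF₀ z trivial
    rw [← hT₀] at hz
    have hann : ∀ x ∈ Submodule.span R (T₀ : Set M), r • x = 0 := by
      intro x hx
      refine Submodule.span_induction ?_ ?_ ?_ ?_ hx
      · intro y hy
        rw [← hm] at hy
        obtain ⟨i, rfl⟩ := hy
        have := congrFun hr i
        simpa [hφ_apply] using this
      · simp
      · intro a b _ _ ha hb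
        rw [smul_add, ha, hb, add_zero]
      · intro c a _ ha
        rw [smul_comm, ha, smul_zero]
    have := hann _ hz
    rw [smul_smul] at this
    rw [mul_smul]
    rw [mul_comm] at this
    simpa [mul_smul] using this
  intro I
  obtain ⟨s', hs'S, F', hF'G, hF'le, hF'⟩ :=
    sNoeth_pi S (fun N => hM N) n (Submodule.map φ I)
  obtain ⟨T', hT'⟩ := hF'G
  -- lift generators of F' to I
  have hlift : ∀ g ∈ T', ∃ a : R, a ∈ I ∧ φ a = g := by
    intro g hg
    have : g ∈ Submodule.map φ I := hF'le (hT' ▸ Submodule.subset_span hg)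
    obtain ⟨a, ha, rfl⟩ := this
    exact ⟨a, ha, rfl⟩
  choose lift hliftI hliftφ using hlift
  set A : Set R := (fun g : T' => lift g.1 g.2) '' Set.univ with hA
  set J : Ideal R := Submodule.span R A with hJ
  have hJI : J ≤ I := by
    rw [hJ, Submodule.span_le]
    rintro a ⟨⟨g, hg⟩, -, rfl⟩
    exact hliftI g hg
  have hmapJ : Submodule.span R (T' : Set (Fin n → M)) ≤ Submodule.map φ J := by
    rw [Submodule.span_le]
    intro g hg
    exact ⟨lift g hg, Submodule.subset_span ⟨⟨g, hg⟩, trivial, rfl⟩, hliftφ g hg⟩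
  refine ⟨t * (s * s'), mul_mem htS (mul_mem hsS hs'S), J,
    ⟨(Set.toFinite A).toFinset, by simp [hJ]⟩, hJI, ?_⟩
  intro x hx
  have hx' : s' • φ x ∈ Submodule.span R (T' : Set (Fin n → M)) := by
    have := hF' (φ x) ⟨x, hx, rfl⟩
    rwa [← hT'] at this
  obtain ⟨j, hjJ, hjφ⟩ := hmapJ hx'
  have hker' : t * (s * (s' * x - j)) = 0 := by
    apply hker
    have h1 : φ (s' * x) = s' • φ x := by rw [← smul_eq_mul, map_smul]
    rw [map_sub, h1, hjφ, sub_self]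
  have : (t * (s * s')) • x = (t * s) • j := by
    have := hker'
    simp only [smul_eq_mul]
    ring_nf
    ring_nf at this
    linear_combination this
  rw [this]
  exact Submodule.smul_mem _ _ hjJ
end

section
/- Let R be a commutative ring, S a multiplicative subset of R, and M a faithful R-module. If M is an S-Noetherian R-module, then R is an S-Noetherian ring. (This removes the hypothesis that S consists of non-zero-divisors.) -/
/-- Key auxiliary lemma: for any finite list of elements of `M` and any ideal `I`,
there are `s ∈ S` and a f.g. ideal `J ≤ I` such that for every `a ∈ I` there is
`b ∈ J` with `s*a - b` annihilating every element of the list. -/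
theorem SFin_aux {R M : Type*} [CommRing R] [AddCommGroup M] [Module R M]
    (S : Submonoid R)
    (hM : ∀ N : Submodule R M, ∃ s ∈ S, SFinSub s N) :
    ∀ (L : List M) (I : Ideal R), ∃ s ∈ S, ∃ J : Ideal R,
      J.FG ∧ J ≤ I ∧ ∀ a ∈ I, ∃ b ∈ J, ∀ x ∈ L, (s * a - b) • x = 0 := by
  intro L
  induction L with
  | nil =>
    intro I
    exact ⟨1, S.one_mem, ⊥, Submodule.fg_bot, bot_le,
      fun a _ => ⟨0, Submodule.zero_mem _, fun x hx => by simp at hx⟩⟩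
  | cons m0 L ih =>
    intro I
    set f : R →ₗ[R] M := LinearMap.toSpanSingleton R M m0 with hf
    obtain ⟨s₁, hs₁, F, hFfg, hFle, hF⟩ := hM (Submodule.map f I)
    obtain ⟨T, hT⟩ := hFfg
    -- choose preimages in I for the generators of F
    have hpre : ∀ t ∈ T, ∃ a, a ∈ I ∧ f a = t := by
      intro t ht
      have : (t : M) ∈ Submodule.map f I := hFle (hT ▸ Submodule.subset_span ht)
      simpa using this
    choose g hg hgf using hpre
    set J1 : Ideal R := Ideal.span (Set.range fun t : T => g t t.2) with hJ1
    have hJ1le : J1 ≤ I := Ideal.span_le.mpr (by rintro _ ⟨t, rfl⟩; exact hg _ _)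
    have hJ1fg : J1.FG := Submodule.fg_span (Set.finite_range _)
    -- F is contained in the image of J1
    have hFsub : F ≤ Submodule.map f J1 := by
      rw [← hT]
      refine Submodule.span_le.mpr ?_
      intro t ht
      exact ⟨g t ht, Ideal.subset_span ⟨⟨t, ht⟩, rfl⟩, hgf t ht⟩
    -- the ideal K of elements of I annihilating m0
    set K : Ideal R := I ⊓ LinearMap.ker f with hK
    obtain ⟨s₂, hs₂, J2, hJ2fg, hJ2le, hJ2⟩ := ih K
    refine ⟨s₂ * s₁, S.mul_mem hs₂ hs₁, J1 ⊔ J2, Submodule.FG.sup hJ1fg hJ2fg,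
      sup_le hJ1le (hJ2le.trans inf_le_left), ?_⟩
    intro a ha
    -- s₁ * a - c ∈ K for some c ∈ J1
    have h1 : s₁ • f a ∈ F := hF (f a) ⟨a, ha, rfl⟩
    obtain ⟨c, hc, hcf⟩ := hFsub h1
    have hcK : s₁ * a - c ∈ K := by
      constructor
      · exact sub_mem (I.mul_mem_left s₁ ha) (hJ1le hc)
      · have : f (s₁ * a - c) = 0 := by
          rw [map_sub, hcf]
          simp [hf, LinearMap.toSpanSingleton_apply, mul_smul]
        exact this
    obtain ⟨b, hb, hbL⟩ := hJ2 _ hcK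
    refine ⟨s₂ * c + b, Submodule.add_mem _ (Submodule.mem_sup_left (J1.mul_mem_left s₂ hc))
      (Submodule.mem_sup_right hb), ?_⟩
    have key : s₂ * s₁ * a - (s₂ * c + b) = s₂ * (s₁ * a - c) - b := by ring
    intro x hx
    rw [key]
    rcases List.mem_cons.mp hx with rfl | hx
    · have h0 : (s₁ * a - c) • x = 0 := hcK.2
      have hb0 : b • x = 0 := (hJ2le hb).2
      rw [sub_smul, mul_smul, h0, smul_zero, hb0, sub_zero]
    · exact hbL x hx

theorem S_noetherian_of_faithful
    {R M : Type*} [CommRing R] [AddCommGroup M] [Module R M]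
    (S : Submonoid R)
    (hfaith : ∀ r : R, (∀ m : M, r • m = 0) → r = 0)
    (hM : ∀ N : Submodule R M, ∃ s ∈ S, SFinSub s N) :
    ∀ I : Ideal R, ∃ s ∈ S, SFinSub s I := by
  obtain ⟨s₀, hs₀, F₀, hF₀fg, _, hF₀⟩ := hM ⊤
  obtain ⟨T₀, hT₀⟩ := hF₀fg
  intro I
  obtain ⟨s, hs, J, hJfg, hJle, hJ⟩ := SFin_aux S hM T₀.toList I
  refine ⟨s₀ * s, S.mul_mem hs₀ hs, J, hJfg, hJle, ?_⟩
  intro a ha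
  obtain ⟨b, hb, hbL⟩ := hJ a ha
  -- (s*a - b) annihilates F₀
  have hann : ∀ y ∈ F₀, (s * a - b) • y = 0 := by
    intro y hy
    rw [← hT₀] at hy
    induction hy using Submodule.span_induction with
    | mem x hx => exact hbL x (by simpa using hx)
    | zero => simp
    | add x y _ _ hx hy => rw [smul_add, hx, hy, add_zero]
    | smul r x _ hx => rw [smul_comm, hx, smul_zero]
  have hzero : s₀ * (s * a - b) = 0 := by
    apply hfaith
    intro m
    rw [mul_comm, mul_smul]
    exact hann _ (hF₀ m trivial)
  rw [mul_sub, sub_eq_zero, ← mul_assoc] at hzero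
  rw [smul_eq_mul, mul_assoc, ← mul_assoc, hzero]
  exact J.mul_mem_left s₀ hb
end

section
/- Let R be a commutative ring, S a multiplicative subset of R, M an R-module, and s ∈ S with sM ⊆ ⟨m₁,…,m_n⟩ ⊆ M for some m₁,…,m_n ∈ M. Define φ : R → M^n by φ(r) = (rm₁,…,rm_n). Then s·Ker(φ) ⊆ Ann_R(M); in particular, if M is S-faithful with t·Ann_R(M) = 0 for t ∈ S, then ts·Ker(φ) = 0. -/
theorem ker_phi_annihilates
    {R M : Type*} [CommRing R] [AddCommGroup M] [Module R M]
    (S : Submonoid R) (s : R) (hs : s ∈ S)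
    (n : ℕ) (m : Fin n → M)
    (hgen : ∀ x : M, s • x ∈ Submodule.span R (Set.range m)) :
    (∀ r : R, (∀ i : Fin n, r • m i = 0) → ∀ x : M, (s * r) • x = 0) ∧
    (∀ t : R, t ∈ S → (∀ r : R, (∀ x : M, r • x = 0) → t * r = 0) →
      ∀ r : R, (∀ i : Fin n, r • m i = 0) → t * s * r = 0) := by
  have key : ∀ r : R, (∀ i : Fin n, r • m i = 0) → ∀ x : M, (s * r) • x = 0 := by
    intro r hr x
    have h := hgen x
    have : r • (s • x) = 0 := by
      refine Submodule.span_induction (p := fun y _ => r • y = 0) ?_ ?_ ?_ ?_ h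
      · rintro y ⟨i, rfl⟩; exact hr i
      · simp
      · intro a b _ _ ha hb; rw [smul_add, ha, hb, add_zero]
      · intro c a _ ha; rw [smul_comm, ha, smul_zero]
    rwa [mul_comm, mul_smul]
  refine ⟨key, fun t ht hfaith r hr => ?_⟩
  rw [mul_assoc]
  exact hfaith _ (key r hr)
end
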